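/- In the abstract setting (X a σ-finite measure space, A self-adjoint on L²(X), 2<q<∞ fixed, resolvents consistently extended to L^{q′}(X)→L²(X) and L^{q′}(X)→L^q(X)): let m₁,m₂:[0,∞)→ℂ be bounded Borel functions and m := m₁m₂. Let J⊂[0,∞) be an interval and τ₀ ≤ τ₁ ≤ … ≤ τ_{N+1} be a partition of J (so J ⊆ ⋃_{k=0}^N [τ_k,τ_{k+1}]). Assume sup_{0≤k≤N} ‖Π_{[τ_k,τ_{k+1}]}‖_{L^{q′}→L²} < ∞, and for j=1,2 set M_j² := Σ_{k=0}^N sup_{τ∈[τ_k,τ_{k+1}]} |m_j(τ)|² · ‖Π_{[τ_k,τ_{k+1}]}‖²_{L^{q′}→L²} and assume M_j < ∞. Then ‖1_J(A) m_j(A)‖_{L^{q′}→L²} ≤ M_j for j=1,2, and ‖1_J(A) m(A)‖_{L^{q′}→L^q} ≤ M₁M₂. -/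

import Mathlib

open MeasureTheory Complex Set

noncomputable section

/-- The Japanese bracket `⟨x⟩ = 2 + |x|`. -/
def jb (x : ℝ) : ℝ := 2 + |x|

/-- The Hölder conjugate exponent `q' = q/(q-1)`. -/
def conjExp (q : ℝ) : ℝ := q / (q - 1)

/-- `σ(q) = min( n(1/2−1/q)−1/2 , ((n−1)/2)(1/2−1/q) )`. -/
def sigmaExp (n : ℕ) (q : ℝ) : ℝ :=
  min ((n : ℝ) * (1 / 2 - 1 / q) - 1 / 2) (((n : ℝ) - 1) / 2 * (1 / 2 - 1 / q))

/-- The admissible range of exponents: `2 ≤ q ≤ 2n/(n−2)` if `n ≥ 3`, `2 ≤ q < ∞` if `n = 2`. -/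
def qRange (n : ℕ) (q : ℝ) : Prop :=
  2 ≤ q ∧ (3 ≤ n → q ≤ 2 * n / ((n : ℝ) - 2))

variable {X : Type*} [MeasurableSpace X]

/-- `OpNormLE μ T p r C` : the operator `T`, defined on `L²(μ)`, satisfies
`‖T f‖_{L^r} ≤ C ‖f‖_{L^p}` for every `f ∈ L²(μ)`; equivalently (by density), `T`
extends from `L² ∩ L^p` to a bounded operator `L^p(μ) → L^r(μ)` of norm at most `C`. -/
def OpNormLE (μ : Measure X) (T : Lp ℂ 2 μ →L[ℂ] Lp ℂ 2 μ) (p r C : ℝ) : Prop :=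
  ∀ f : Lp ℂ 2 μ,
    eLpNorm (⇑(T f)) (ENNReal.ofReal r) μ ≤
      ENNReal.ofReal C * eLpNorm (⇑f) (ENNReal.ofReal p) μ

/-- An abstract Borel functional calculus on `L²(μ)`, i.e. the assignment `m ↦ m(A)`
given by the spectral theorem for a self-adjoint operator `A` on `L²(μ)`. -/
structure BorelFC (μ : Measure X) where
  fc : (ℝ → ℂ) → (Lp ℂ 2 μ →L[ℂ] Lp ℂ 2 μ)
  fc_add : ∀ m₁ m₂ : ℝ → ℂ, fc (fun t => m₁ t + m₂ t) = fc m₁ + fc m₂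
  fc_smul : ∀ (c : ℂ) (m : ℝ → ℂ), fc (fun t => c * m t) = c • fc m
  fc_mul : ∀ m₁ m₂ : ℝ → ℂ, fc (fun t => m₁ t * m₂ t) = (fc m₁).comp (fc m₂)
  fc_one : fc (fun _ => 1) = ContinuousLinearMap.id ℂ (Lp ℂ 2 μ)
  fc_norm_le : ∀ (m : ℝ → ℂ) (C : ℝ), (∀ t, ‖m t‖ ≤ C) → ‖fc m‖ ≤ C
  fc_star : ∀ m : ℝ → ℂ,
    fc (fun t => (starRingEnd ℂ) (m t)) = ContinuousLinearMap.adjoint (fc m)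

namespace BorelFC

variable {μ : Measure X} (F : BorelFC μ)

/-- The spectral projection `Π_{[a,b]} = 1_{[a,b]}(A)`. -/
def proj (a b : ℝ) : Lp ℂ 2 μ →L[ℂ] Lp ℂ 2 μ :=
  F.fc (Set.indicator (Set.Icc a b) fun _ => (1 : ℂ))

/-- The resolvent `(A² − z)⁻¹` of `A²`, via the functional calculus of `A`. -/
def res2 (z : ℂ) : Lp ℂ 2 μ →L[ℂ] Lp ℂ 2 μ :=
  F.fc fun t => (((t : ℂ)) ^ 2 - z)⁻¹

/-- If `F` is the functional calculus of `A = √(−Δ_g)`, this is the resolvent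
`(Δ_g + z)⁻¹ = (z − A²)⁻¹`. -/
def resLap (z : ℂ) : Lp ℂ 2 μ →L[ℂ] Lp ℂ 2 μ :=
  F.fc fun t => (z - ((t : ℂ)) ^ 2)⁻¹

end BorelFC

/-- The imaginary part `Im T = (T − T^*)/(2i)` of an operator on `L²(μ)`. -/
def imOp {μ : Measure X} (T : Lp ℂ 2 μ →L[ℂ] Lp ℂ 2 μ) : Lp ℂ 2 μ →L[ℂ] Lp ℂ 2 μ :=
  ((2 * Complex.I)⁻¹) • (T - ContinuousLinearMap.adjoint T)

/-- The resolvents `(A−z)⁻¹`, `z ∈ ℂ∖ℝ`, of the self-adjoint operator `A` underlying the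
functional calculus `F` admit consistent bounded extensions `L^{q′} → L²` and
`L^{q′} → L^q`. -/
def ResolventExtends {μ : Measure X} (F : BorelFC μ) (q : ℝ) : Prop :=
  ∀ z : ℂ, z.im ≠ 0 →
    (∃ C : ℝ, OpNormLE μ (F.fc fun t => ((t : ℂ) - z)⁻¹) (conjExp q) 2 C) ∧
    (∃ C : ℝ, OpNormLE μ (F.fc fun t => ((t : ℂ) - z)⁻¹) (conjExp q) q C)


/-!
Pointwise, `|1_J m|² ≤ ∑ₖ bₖ² 1_{[τₖ, τₖ₊₁]}` because the intervals `[τₖ, τₖ₊₁]` cover `J`.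
Positivity of the functional calculus (`ψ - φ = |√(ψ - φ)|²` gives `φ(A) ≤ ψ(A)`) turns this into
`‖1_J(A) m(A) f‖² ≤ ∑ₖ bₖ² ‖Π_{[τₖ,τₖ₊₁]} f‖²`, whence the `L^{q'} → L²` bounds.
For the product, `1_J(A) m(A) = (1_J(A) m₁(A)) (1_J(A) m₂(A))`, and the adjoint of the first factor
is `1_J(A) m̄₁(A)`, which maps `L^{q'} → L²` with norm `≤ M₁`; by duality the first factor maps
`L² → L^q` with norm `≤ M₁`. The duality is tested against the Hölder extremisers `u |u|^{q-2}`
of the truncations `u = 1_{|h| ≤ n} h`, which are square integrable, and Fatou's lemma removes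
the truncation.
-/

open Filter Topology
open scoped InnerProductSpace ENNReal

lemma exists_mem_Icc_succ_of_mem_Icc (τ : ℕ → ℝ) {t : ℝ} :
    ∀ {N : ℕ}, t ∈ Icc (τ 0) (τ (N + 1)) → ∃ k ≤ N, t ∈ Icc (τ k) (τ (k + 1))
  | 0, ht => ⟨0, le_rfl, ht⟩
  | N + 1, ht => by
    by_cases htN : t ≤ τ (N + 1)
    · obtain ⟨k, hk, htk⟩ := exists_mem_Icc_succ_of_mem_Icc τ ⟨ht.1, htN⟩
      exact ⟨k, hk.trans N.le_succ, htk⟩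
    · exact ⟨N + 1, le_rfl, (not_le.mp htN).le, ht.2⟩

lemma norm_indicator_mul_sq_le_sum (m : ℝ → ℂ) (N : ℕ) (τ b : ℕ → ℝ)
    (hb : ∀ k ≤ N, ∀ t ∈ Icc (τ k) (τ (k + 1)), ‖m t‖ ≤ b k) (t : ℝ) :
    ‖(Icc (τ 0) (τ (N + 1))).indicator (fun _ => (1 : ℂ)) t * m t‖ ^ 2 ≤
      ∑ k ∈ Finset.range (N + 1), b k ^ 2 * (Icc (τ k) (τ (k + 1))).indicator 1 t := by
  have hterm_nonneg : ∀ k ∈ Finset.range (N + 1),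
      0 ≤ b k ^ 2 * (Icc (τ k) (τ (k + 1))).indicator (1 : ℝ → ℝ) t := fun k _ =>
    mul_nonneg (sq_nonneg _) (Set.indicator_nonneg (fun _ _ => zero_le_one) t)
  by_cases ht : t ∈ Icc (τ 0) (τ (N + 1))
  · obtain ⟨k, hk, htk⟩ := exists_mem_Icc_succ_of_mem_Icc τ ht
    calc ‖(Icc (τ 0) (τ (N + 1))).indicator (fun _ => (1 : ℂ)) t * m t‖ ^ 2
        = ‖m t‖ ^ 2 := by simp [ht]
      _ ≤ b k ^ 2 * (Icc (τ k) (τ (k + 1))).indicator 1 t := by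
        simpa [htk] using pow_le_pow_left₀ (norm_nonneg _) (hb k hk t htk) 2
      _ ≤ _ := Finset.single_le_sum hterm_nonneg (Finset.mem_range_succ_iff.mpr hk)
  · simpa [ht] using Finset.sum_nonneg hterm_nonneg

section LpDuality

variable {α : Type*} [MeasurableSpace α] {μ : Measure α}

lemma one_div_add_one_div_conjExp {q : ℝ} (hq : 1 < q) : 1 / q + 1 / conjExp q = 1 := by
  have : q - 1 ≠ 0 := by linarith
  rw [conjExp]
  field_simp
  ring

lemma sub_one_mul_conjExp {q : ℝ} (hq : 1 < q) : (q - 1) * conjExp q = q := by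
  have : q - 1 ≠ 0 := by linarith
  rw [conjExp]
  field_simp

lemma conjExp_pos {q : ℝ} (hq : 1 < q) : 0 < conjExp q :=
  div_pos (by linarith) (by linarith)

lemma ENNReal.rpow_le_of_le_mul_rpow {I K : ℝ≥0∞} {s t : ℝ} (hI : I ≠ ⊤) (hs : 0 < s)
    (hst : s + t = 1) (h : I ≤ K * I ^ t) : I ^ s ≤ K := by
  rcases eq_or_ne I 0 with rfl | hI0
  · simp [ENNReal.zero_rpow_of_pos hs]
  rw [← ENNReal.mul_le_mul_iff_left (ENNReal.rpow_pos (pos_iff_ne_zero.mpr hI0) hI).ne'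
    (ENNReal.rpow_ne_top_of_ne_zero hI0 hI), ← ENNReal.rpow_add _ _ hI0 hI, hst, ENNReal.rpow_one]
  exact h

/-- `u |u|^{q-2}`, the function attaining equality in Hölder's inequality for `‖u‖_q`. -/
def dualPower {β : Type*} (q : ℝ) (u : β → ℂ) : β → ℂ :=
  fun x => u x * ((‖u x‖ ^ (q - 2) : ℝ) : ℂ)

lemma norm_dualPower {β : Type*} {q : ℝ} (hq : 1 < q) (u : β → ℂ) (x : β) :
    ‖dualPower q u x‖ = ‖u x‖ ^ (q - 1) := by
  rw [dualPower, norm_mul, Complex.norm_real, Real.norm_eq_abs,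
    abs_of_nonneg (Real.rpow_nonneg (norm_nonneg _) _)]
  conv_rhs => rw [show q - 1 = 1 + (q - 2) by ring]
  rw [Real.rpow_add' (norm_nonneg _) (by linarith), Real.rpow_one]

lemma eLpNorm_dualPower {q : ℝ} (hq : 1 < q) (u : α → ℂ) :
    eLpNorm (dualPower q u) (ENNReal.ofReal (conjExp q)) μ =
      (∫⁻ x, ‖u x‖ₑ ^ q ∂μ) ^ (1 / conjExp q) := by
  have hq' := conjExp_pos hq
  rw [eLpNorm_eq_lintegral_rpow_enorm_toReal (by simpa using hq') ENNReal.ofReal_ne_top,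
    ENNReal.toReal_ofReal hq'.le]
  congr 2
  funext x
  rw [← ofReal_norm, norm_dualPower hq, ← ENNReal.ofReal_rpow_of_nonneg (norm_nonneg _)
    (by linarith), ofReal_norm, ← ENNReal.rpow_mul, sub_one_mul_conjExp hq]

lemma inner_dualPower_indicator {β : Type*} {q : ℝ} (hq : 2 ≤ q) (A : Set β) (h : β → ℂ)
    (x : β) :
    ⟪dualPower q (A.indicator h) x, h x⟫_ℂ = ((‖A.indicator h x‖ ^ q : ℝ) : ℂ) := by
  by_cases hx : x ∈ A
  · have hpow : ‖h x‖ ^ q = ‖h x‖ ^ 2 * ‖h x‖ ^ (q - 2) := by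
      rw [← Real.rpow_natCast, ← Real.rpow_add' (norm_nonneg _) (by push_cast; linarith)]
      norm_num
    simp only [dualPower, Set.indicator_of_mem hx, RCLike.inner_apply, map_mul,
      Complex.conj_ofReal, hpow]
    rw [← mul_assoc, Complex.mul_conj', Complex.ofReal_mul]
    push_cast
    ring
  · simp [dualPower, hx, Real.zero_rpow (by linarith : q ≠ 0)]

lemma memLp_dualPower_indicator {q : ℝ} (hq : 2 ≤ q) (h : Lp ℂ 2 μ) (n : ℕ) :
    MemLp (dualPower q ({x : α | ‖h x‖ ≤ n}.indicator h)) 2 μ := by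
  have hmeas : StronglyMeasurable h := Lp.stronglyMeasurable h
  refine (Lp.memLp h).of_le_mul (c := (n : ℝ) ^ (q - 2)) ?_ (ae_of_all _ fun x => ?_)
  · have hu : Measurable ({x : α | ‖h x‖ ≤ n}.indicator h) :=
      hmeas.measurable.indicator (measurableSet_le hmeas.measurable.norm measurable_const)
    unfold dualPower
    fun_prop
  rw [norm_dualPower (by linarith)]
  by_cases hx : ‖h x‖ ≤ n
  · rw [Set.indicator_of_mem (by exact hx), show q - 1 = (q - 2) + 1 by ring,
      Real.rpow_add' (norm_nonneg _) (by linarith), Real.rpow_one]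
    gcongr
  · rw [Set.indicator_of_notMem (by exact hx), norm_zero, Real.zero_rpow (by linarith)]
    positivity

lemma eLpNorm_indicator_le_of_forall_inner_le {q : ℝ} (hq : 2 ≤ q) (h : Lp ℂ 2 μ) {K : ℝ≥0∞}
    (hK : ∀ g : Lp ℂ 2 μ, ‖⟪g, h⟫_ℂ‖ₑ ≤ K * eLpNorm g (ENNReal.ofReal (conjExp q)) μ) (n : ℕ) :
    eLpNorm ({x : α | ‖h x‖ ≤ n}.indicator h) (ENNReal.ofReal q) μ ≤ K := by
  have hq0 : 0 < q := by linarith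
  set u := {x : α | ‖h x‖ ≤ n}.indicator h
  have hmem := memLp_dualPower_indicator hq h n
  set g := hmem.toLp
  set I := ∫⁻ x, ‖u x‖ₑ ^ q ∂μ
  have hinner : ∀ᵐ x ∂μ, ⟪g x, h x⟫_ℂ = ((‖u x‖ ^ q : ℝ) : ℂ) := by
    filter_upwards [hmem.coeFn_toLp] with x hx
    rw [hx, inner_dualPower_indicator hq]
  have hint : Integrable (fun x => ‖u x‖ ^ q) μ :=
    (L2.integrable_inner (𝕜 := ℂ) g h).re.congr
      (hinner.mono fun x hx => by simp only [hx, RCLike.re_to_complex, Complex.ofReal_re])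
  have hpair : ‖⟪g, h⟫_ℂ‖ₑ = I := by
    rw [L2.inner_def, integral_congr_ae hinner, integral_complex_ofReal, ← ofReal_norm,
      Complex.norm_real, Real.norm_of_nonneg (integral_nonneg fun x => by positivity),
      ofReal_integral_eq_lintegral_ofReal hint (ae_of_all _ fun x => by positivity)]
    refine lintegral_congr fun x => ?_
    rw [← ENNReal.ofReal_rpow_of_nonneg (norm_nonneg _) hq0.le, ofReal_norm]
  have hg : eLpNorm g (ENNReal.ofReal (conjExp q)) μ = I ^ (1 / conjExp q) := by
    rw [eLpNorm_congr_ae hmem.coeFn_toLp, eLpNorm_dualPower (by linarith)]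
  have hu : eLpNorm u (ENNReal.ofReal q) μ = I ^ (1 / q) := by
    rw [eLpNorm_eq_lintegral_rpow_enorm_toReal (by simpa using hq0) ENNReal.ofReal_ne_top,
      ENNReal.toReal_ofReal hq0.le]
  rw [hu]
  refine ENNReal.rpow_le_of_le_mul_rpow (hpair ▸ enorm_ne_top) (by positivity)
    (one_div_add_one_div_conjExp (by linarith)) ?_
  rw [← hg, ← hpair]
  exact hK g

lemma eLpNorm_le_of_forall_inner_le {q : ℝ} (hq : 2 ≤ q) (h : Lp ℂ 2 μ) {K : ℝ≥0∞}
    (hK : ∀ g : Lp ℂ 2 μ, ‖⟪g, h⟫_ℂ‖ₑ ≤ K * eLpNorm g (ENNReal.ofReal (conjExp q)) μ) :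
    eLpNorm h (ENNReal.ofReal q) μ ≤ K := by
  have hmeas : StronglyMeasurable h := Lp.stronglyMeasurable h
  have hlevel (n : ℕ) : MeasurableSet {x : α | ‖h x‖ ≤ n} :=
    measurableSet_le hmeas.measurable.norm measurable_const
  have htrunc : ∀ x, Tendsto (fun n : ℕ => {x : α | ‖h x‖ ≤ n}.indicator h x) atTop (𝓝 (h x)) :=
    fun x => tendsto_const_nhds.congr' <|
      (tendsto_natCast_atTop_atTop.eventually_ge_atTop ‖h x‖).mono fun n hn =>
        (Set.indicator_of_mem (by exact hn) _).symm
  calc eLpNorm h (ENNReal.ofReal q) μ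
      ≤ atTop.liminf fun n : ℕ => eLpNorm ({x : α | ‖h x‖ ≤ n}.indicator h) (ENNReal.ofReal q) μ :=
        Lp.eLpNorm_lim_le_liminf_eLpNorm (fun n => (hmeas.indicator (hlevel n)).aestronglyMeasurable)
          _ (ae_of_all _ htrunc)
    _ ≤ K := Filter.liminf_le_of_frequently_le' <|
        Filter.Frequently.of_forall (eLpNorm_indicator_le_of_forall_inner_le hq h hK)

end LpDuality

section OpNormLE

variable {α : Type*} [MeasurableSpace α] {μ : Measure α}

lemma eLpNorm_ofReal_two {E : Type*} [NormedAddCommGroup E] (g : Lp E 2 μ) :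
    eLpNorm g (ENNReal.ofReal 2) μ = ‖g‖ₑ := by
  rw [Lp.enorm_def]
  norm_num

lemma OpNormLE.of_norm_sq_le_sum {ι : Type*} {T : Lp ℂ 2 μ →L[ℂ] Lp ℂ 2 μ}
    {S : ι → Lp ℂ 2 μ →L[ℂ] Lp ℂ 2 μ} {s : Finset ι} {c P : ι → ℝ} {p : ℝ}
    (hc : ∀ k ∈ s, 0 ≤ c k) (hP : ∀ k ∈ s, 0 ≤ P k) (hS : ∀ k ∈ s, OpNormLE μ (S k) p 2 (P k))
    (hT : ∀ f, ‖T f‖ ^ 2 ≤ ∑ k ∈ s, c k * ‖S k f‖ ^ 2) :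
    OpNormLE μ T p 2 (√(∑ k ∈ s, c k * P k ^ 2)) := by
  intro f
  set E := eLpNorm f (ENNReal.ofReal p) μ
  have hSf : ∀ k ∈ s, ‖S k f‖ₑ ≤ ENNReal.ofReal (P k) * E := fun k hk => by
    simpa only [eLpNorm_ofReal_two] using hS k hk f
  rw [eLpNorm_ofReal_two, ← ENNReal.pow_le_pow_left_iff two_ne_zero]
  calc ‖T f‖ₑ ^ 2 = ENNReal.ofReal (‖T f‖ ^ 2) := by
        rw [← ofReal_norm, ENNReal.ofReal_pow (norm_nonneg _)]
    _ ≤ ENNReal.ofReal (∑ k ∈ s, c k * ‖S k f‖ ^ 2) := ENNReal.ofReal_le_ofReal (hT f)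
    _ = ∑ k ∈ s, ENNReal.ofReal (c k) * ‖S k f‖ₑ ^ 2 := by
        rw [ENNReal.ofReal_sum_of_nonneg fun k hk => mul_nonneg (hc k hk) (sq_nonneg _)]
        refine Finset.sum_congr rfl fun k hk => ?_
        rw [ENNReal.ofReal_mul (hc k hk), ENNReal.ofReal_pow (norm_nonneg _), ofReal_norm]
    _ ≤ ∑ k ∈ s, ENNReal.ofReal (c k) * (ENNReal.ofReal (P k) * E) ^ 2 := by
        gcongr with k hk
        exact hSf k hk
    _ = (ENNReal.ofReal (√(∑ k ∈ s, c k * P k ^ 2)) * E) ^ 2 := by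
        have hterm : ∀ k ∈ s, 0 ≤ c k * P k ^ 2 := fun k hk => mul_nonneg (hc k hk) (sq_nonneg _)
        rw [mul_pow, ← ENNReal.ofReal_pow (Real.sqrt_nonneg _),
          Real.sq_sqrt (Finset.sum_nonneg hterm), ENNReal.ofReal_sum_of_nonneg hterm,
          Finset.sum_mul]
        refine Finset.sum_congr rfl fun k hk => ?_
        rw [ENNReal.ofReal_mul (hc k hk), ENNReal.ofReal_pow (hP k hk)]
        ring

lemma OpNormLE.comp {T₁ T₂ : Lp ℂ 2 μ →L[ℂ] Lp ℂ 2 μ} {p r s C₁ C₂ : ℝ}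
    (h₁ : OpNormLE μ T₁ s r C₁) (h₂ : OpNormLE μ T₂ p s C₂) (hC₁ : 0 ≤ C₁) :
    OpNormLE μ (T₁.comp T₂) p r (C₁ * C₂) := fun f =>
  calc eLpNorm (T₁ (T₂ f)) (ENNReal.ofReal r) μ
      ≤ ENNReal.ofReal C₁ * eLpNorm (T₂ f) (ENNReal.ofReal s) μ := h₁ (T₂ f)
    _ ≤ ENNReal.ofReal C₁ * (ENNReal.ofReal C₂ * eLpNorm f (ENNReal.ofReal p) μ) := by
        gcongr
        exact h₂ f
    _ = ENNReal.ofReal (C₁ * C₂) * eLpNorm f (ENNReal.ofReal p) μ := by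
        rw [ENNReal.ofReal_mul hC₁, mul_assoc]

lemma OpNormLE.of_adjoint {T : Lp ℂ 2 μ →L[ℂ] Lp ℂ 2 μ} {q C : ℝ} (hq : 2 ≤ q)
    (hT : OpNormLE μ (ContinuousLinearMap.adjoint T) (conjExp q) 2 C) :
    OpNormLE μ T 2 q C := by
  intro u
  rw [eLpNorm_ofReal_two]
  refine eLpNorm_le_of_forall_inner_le hq (T u) fun g => ?_
  have hTg := hT g
  rw [eLpNorm_ofReal_two] at hTg
  calc ‖⟪g, T u⟫_ℂ‖ₑ = ‖⟪ContinuousLinearMap.adjoint T g, u⟫_ℂ‖ₑ := by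
        rw [ContinuousLinearMap.adjoint_inner_left]
    _ ≤ ‖ContinuousLinearMap.adjoint T g‖ₑ * ‖u‖ₑ := by
        simpa only [enorm_eq_nnnorm, ← ENNReal.coe_mul, ENNReal.coe_le_coe]
          using nnnorm_inner_le_nnnorm (𝕜 := ℂ) _ _
    _ ≤ ENNReal.ofReal C * eLpNorm g (ENNReal.ofReal (conjExp q)) μ * ‖u‖ₑ := by gcongr
    _ = ENNReal.ofReal C * ‖u‖ₑ * eLpNorm g (ENNReal.ofReal (conjExp q)) μ := by ring

end OpNormLE

namespace BorelFC

variable {μ : Measure X} (F : BorelFC μ)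

lemma fc_zero : F.fc (fun _ => 0) = 0 := by
  simpa using F.fc_smul 0 (fun _ => 0)

lemma fc_sum {ι : Type*} (s : Finset ι) (g : ι → ℝ → ℂ) :
    F.fc (fun t => ∑ k ∈ s, g k t) = ∑ k ∈ s, F.fc (g k) := by
  classical
  induction s using Finset.induction with
  | empty => simpa using F.fc_zero
  | insert k s hks ih => simp only [Finset.sum_insert hks, F.fc_add, ih]

lemma fc_eq_add_fc_sub (φ ψ : ℝ → ℂ) : F.fc ψ = F.fc φ + F.fc (fun t => ψ t - φ t) := by
  rw [← F.fc_add]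
  simp

lemma norm_fc_apply_sq (g : ℝ → ℂ) (f : Lp ℂ 2 μ) :
    ‖F.fc g f‖ ^ 2 = (⟪F.fc (fun t => ((‖g t‖ ^ 2 : ℝ) : ℂ)) f, f⟫_ℂ).re := by
  have hsq : (fun t => ((‖g t‖ ^ 2 : ℝ) : ℂ)) = fun t => (starRingEnd ℂ) (g t) * g t := by
    funext t
    rw [Complex.conj_mul']
    push_cast
    rfl
  rw [hsq, F.fc_mul, F.fc_star, ContinuousLinearMap.comp_apply,
    ContinuousLinearMap.adjoint_inner_left, ← inner_self_eq_norm_sq (𝕜 := ℂ)]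
  rfl

lemma re_inner_fc_nonneg {φ : ℝ → ℝ} (hφ : 0 ≤ φ) (f : Lp ℂ 2 μ) :
    0 ≤ (⟪F.fc (fun t => (φ t : ℂ)) f, f⟫_ℂ).re := by
  have hφ_sq : (fun t => (φ t : ℂ)) = fun t => ((‖(Real.sqrt (φ t) : ℂ)‖ ^ 2 : ℝ) : ℂ) := by
    funext t
    rw [Complex.norm_real, Real.norm_eq_abs, sq_abs, Real.sq_sqrt (hφ t)]
  rw [hφ_sq, ← norm_fc_apply_sq]
  positivity

lemma re_inner_fc_mono {φ ψ : ℝ → ℝ} (h : φ ≤ ψ) (f : Lp ℂ 2 μ) :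
    (⟪F.fc (fun t => (φ t : ℂ)) f, f⟫_ℂ).re ≤ (⟪F.fc (fun t => (ψ t : ℂ)) f, f⟫_ℂ).re := by
  have hdiff := F.re_inner_fc_nonneg (φ := ψ - φ) (sub_nonneg.mpr h) f
  rw [F.fc_eq_add_fc_sub (fun t => (φ t : ℂ)) (fun t => (ψ t : ℂ)),
    add_apply, inner_add_left, Complex.add_re]
  simp only [Pi.sub_apply, Complex.ofReal_sub] at hdiff
  linarith

lemma norm_fc_indicator_apply_sq (S : Set ℝ) (f : Lp ℂ 2 μ) :
    ‖F.fc (S.indicator fun _ => 1) f‖ ^ 2 = (⟪F.fc (S.indicator fun _ => 1) f, f⟫_ℂ).re := by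
  rw [norm_fc_apply_sq]
  congr 4
  funext t
  by_cases ht : t ∈ S <;> simp [ht]

lemma norm_fc_apply_sq_le_sum {ι : Type*} (g : ℝ → ℂ) (s : Finset ι) (c : ι → ℝ)
    (S : ι → Set ℝ) (hg : ∀ t, ‖g t‖ ^ 2 ≤ ∑ k ∈ s, c k * (S k).indicator 1 t)
    (f : Lp ℂ 2 μ) :
    ‖F.fc g f‖ ^ 2 ≤ ∑ k ∈ s, c k * ‖F.fc ((S k).indicator fun _ => 1) f‖ ^ 2 := by
  have hweights : (fun t => ((∑ k ∈ s, c k * (S k).indicator 1 t : ℝ) : ℂ))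
      = fun t => ∑ k ∈ s, (c k : ℂ) * (S k).indicator (fun _ => 1) t := by
    funext t
    push_cast
    refine Finset.sum_congr rfl fun k _ => ?_
    by_cases ht : t ∈ S k <;> simp [ht]
  calc ‖F.fc g f‖ ^ 2 = (⟪F.fc (fun t => ((‖g t‖ ^ 2 : ℝ) : ℂ)) f, f⟫_ℂ).re :=
        F.norm_fc_apply_sq g f
    _ ≤ (⟪F.fc (fun t => ((∑ k ∈ s, c k * (S k).indicator 1 t : ℝ) : ℂ)) f, f⟫_ℂ).re :=
        F.re_inner_fc_mono hg f
    _ = ∑ k ∈ s, c k * ‖F.fc ((S k).indicator fun _ => 1) f‖ ^ 2 := by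
        rw [hweights, F.fc_sum, sum_apply, sum_inner, Complex.re_sum]
        refine Finset.sum_congr rfl fun k _ => ?_
        rw [F.fc_smul, smul_apply, inner_smul_left, Complex.conj_ofReal,
          Complex.re_ofReal_mul, norm_fc_indicator_apply_sq]

lemma proj_comp_fc (a b : ℝ) (m : ℝ → ℂ) :
    (F.proj a b).comp (F.fc m) = F.fc fun t => (Icc a b).indicator (fun _ => 1) t * m t :=
  (F.fc_mul _ m).symm

lemma proj_comp_fc_mul (a b : ℝ) (m₁ m₂ : ℝ → ℂ) :
    (F.proj a b).comp (F.fc fun t => m₁ t * m₂ t) =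
      ((F.proj a b).comp (F.fc m₁)).comp ((F.proj a b).comp (F.fc m₂)) := by
  simp only [proj_comp_fc, ← F.fc_mul]
  congr 1
  funext t
  by_cases ht : t ∈ Icc a b <;> simp [ht, mul_left_comm]

lemma adjoint_proj_comp_fc (a b : ℝ) (m : ℝ → ℂ) :
    ContinuousLinearMap.adjoint ((F.proj a b).comp (F.fc m)) =
      (F.proj a b).comp (F.fc fun t => (starRingEnd ℂ) (m t)) := by
  rw [proj_comp_fc, proj_comp_fc, ← F.fc_star]
  congr 1
  funext t
  by_cases ht : t ∈ Icc a b <;> simp [ht]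

lemma opNormLE_proj_comp_fc (p : ℝ) (m : ℝ → ℂ) (N : ℕ) (τ P b : ℕ → ℝ)
    (hP₀ : ∀ k ≤ N, 0 ≤ P k) (hP : ∀ k ≤ N, OpNormLE μ (F.proj (τ k) (τ (k + 1))) p 2 (P k))
    (hb : ∀ k ≤ N, ∀ t ∈ Icc (τ k) (τ (k + 1)), ‖m t‖ ≤ b k) :
    OpNormLE μ ((F.proj (τ 0) (τ (N + 1))).comp (F.fc m)) p 2
      (√(∑ k ∈ Finset.range (N + 1), b k ^ 2 * P k ^ 2)) := by
  refine OpNormLE.of_norm_sq_le_sum (S := fun k => F.proj (τ k) (τ (k + 1)))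
    (fun k _ => sq_nonneg _) (fun k hk => hP₀ k (Finset.mem_range_succ_iff.mp hk))
    (fun k hk => hP k (Finset.mem_range_succ_iff.mp hk)) fun f => ?_
  rw [proj_comp_fc]
  exact F.norm_fc_apply_sq_le_sum _ _ _ _ (norm_indicator_mul_sq_le_sum m N τ b hb) f

end BorelFC

theorem spectral_multiplier_bound_general
    {X : Type*} [MeasurableSpace X] (ν : Measure X)
    (F : BorelFC ν) (q : ℝ) (hq : 2 < q)
    (m₁ m₂ : ℝ → ℂ)
    (N : ℕ) (τ : ℕ → ℝ)
    (P b₁ b₂ : ℕ → ℝ)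
    (hP : ∀ k ≤ N, 0 ≤ P k ∧
      OpNormLE ν (F.proj (τ k) (τ (k + 1))) (conjExp q) 2 (P k))
    (hb₁ : ∀ k ≤ N, 0 ≤ b₁ k ∧
      ∀ t ∈ Set.Icc (τ k) (τ (k + 1)), ‖m₁ t‖ ≤ b₁ k)
    (hb₂ : ∀ k ≤ N, 0 ≤ b₂ k ∧
      ∀ t ∈ Set.Icc (τ k) (τ (k + 1)), ‖m₂ t‖ ≤ b₂ k) :
    OpNormLE ν ((F.proj (τ 0) (τ (N + 1))).comp (F.fc m₁)) (conjExp q) 2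
      (Real.sqrt (∑ k ∈ Finset.range (N + 1), b₁ k ^ 2 * P k ^ 2)) ∧
    OpNormLE ν ((F.proj (τ 0) (τ (N + 1))).comp (F.fc m₂)) (conjExp q) 2
      (Real.sqrt (∑ k ∈ Finset.range (N + 1), b₂ k ^ 2 * P k ^ 2)) ∧
    OpNormLE ν ((F.proj (τ 0) (τ (N + 1))).comp (F.fc fun t => m₁ t * m₂ t))
      (conjExp q) q
      (Real.sqrt (∑ k ∈ Finset.range (N + 1), b₁ k ^ 2 * P k ^ 2) *
        Real.sqrt (∑ k ∈ Finset.range (N + 1), b₂ k ^ 2 * P k ^ 2)) := by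
  have h₁ := F.opNormLE_proj_comp_fc (conjExp q) m₁ N τ P b₁ (fun k hk => (hP k hk).1)
    (fun k hk => (hP k hk).2) (fun k hk => (hb₁ k hk).2)
  have h₂ := F.opNormLE_proj_comp_fc (conjExp q) m₂ N τ P b₂ (fun k hk => (hP k hk).1)
    (fun k hk => (hP k hk).2) (fun k hk => (hb₂ k hk).2)
  have h₁_adjoint := F.opNormLE_proj_comp_fc (conjExp q) (fun t => (starRingEnd ℂ) (m₁ t)) N τ P
    b₁ (fun k hk => (hP k hk).1) (fun k hk => (hP k hk).2)
    (fun k hk t ht => by simpa using (hb₁ k hk).2 t ht)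
  rw [← F.adjoint_proj_comp_fc] at h₁_adjoint
  refine ⟨h₁, h₂, ?_⟩
  rw [F.proj_comp_fc_mul]
  exact (OpNormLE.of_adjoint hq.le h₁_adjoint).comp h₂ (Real.sqrt_nonneg _)

/-- **Spectral multiplier bound** (Lemma 3.1 of the paper). In the abstract setting —
`X` a σ-finite measure space, `A` self-adjoint on `L²(X)` with Borel functional calculus
`F`, `2 < q < ∞`, and resolvents consistently extended `L^{q′} → L²`, `L^{q′} → L^q` —
let `m₁, m₂ : [0,∞) → ℂ` be bounded Borel functions, `m = m₁m₂`,
`J = [τ₀, τ_{N+1}] ⊆ [0,∞)` an interval partitioned by `τ₀ ≤ τ₁ ≤ ⋯ ≤ τ_{N+1}`.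
If `‖Π_{[τ_k,τ_{k+1}]}‖_{L^{q′}→L²} ≤ P k` and `sup_{[τ_k,τ_{k+1}]}|m_j| ≤ b_j k` for
`0 ≤ k ≤ N`, then with `M_j = (Σ_{k≤N} (b_j k)²(P k)²)^{1/2}`:
`‖1_J(A) m_j(A)‖_{L^{q′}→L²} ≤ M_j` and `‖1_J(A) m(A)‖_{L^{q′}→L^q} ≤ M₁M₂`. -/
theorem spectral_multiplier_bound
    {X : Type*} [MeasurableSpace X] (ν : Measure X) [SigmaFinite ν]
    (F : BorelFC ν) (q : ℝ) (hq : 2 < q) (hres : ResolventExtends F q)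
    (m₁ m₂ : ℝ → ℂ) (hm₁ : Measurable m₁) (hm₂ : Measurable m₂)
    (hm₁b : ∃ C : ℝ, ∀ t : ℝ, ‖m₁ t‖ ≤ C) (hm₂b : ∃ C : ℝ, ∀ t : ℝ, ‖m₂ t‖ ≤ C)
    (N : ℕ) (τ : ℕ → ℝ) (hτ0 : 0 ≤ τ 0) (hτ : ∀ k ≤ N, τ k ≤ τ (k + 1))
    (P b₁ b₂ : ℕ → ℝ)
    (hP : ∀ k ≤ N, 0 ≤ P k ∧
      OpNormLE ν (F.proj (τ k) (τ (k + 1))) (conjExp q) 2 (P k))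
    (hb₁ : ∀ k ≤ N, 0 ≤ b₁ k ∧
      ∀ t ∈ Set.Icc (τ k) (τ (k + 1)), ‖m₁ t‖ ≤ b₁ k)
    (hb₂ : ∀ k ≤ N, 0 ≤ b₂ k ∧
      ∀ t ∈ Set.Icc (τ k) (τ (k + 1)), ‖m₂ t‖ ≤ b₂ k) :
    OpNormLE ν ((F.proj (τ 0) (τ (N + 1))).comp (F.fc m₁)) (conjExp q) 2
      (Real.sqrt (∑ k ∈ Finset.range (N + 1), b₁ k ^ 2 * P k ^ 2)) ∧
    OpNormLE ν ((F.proj (τ 0) (τ (N + 1))).comp (F.fc m₂)) (conjExp q) 2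
      (Real.sqrt (∑ k ∈ Finset.range (N + 1), b₂ k ^ 2 * P k ^ 2)) ∧
    OpNormLE ν ((F.proj (τ 0) (τ (N + 1))).comp (F.fc fun t => m₁ t * m₂ t))
      (conjExp q) q
      (Real.sqrt (∑ k ∈ Finset.range (N + 1), b₁ k ^ 2 * P k ^ 2) *
        Real.sqrt (∑ k ∈ Finset.range (N + 1), b₂ k ^ 2 * P k ^ 2)) :=
  spectral_multiplier_bound_general ν F q hq m₁ m₂ N τ P b₁ b₂ hP hb₁ hb₂

end
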